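/- Suppose M is a simple matroid of rank r with exactly (q^r − 1)/(q − 1) points in which every line has at most q + 1 points, and suppose that for every element e, ε(M/e) ≤ (q^{r−1} − 1)/(q − 1). Then every line of M has exactly q + 1 points. -/

import Mathlib

open Matroid Set

/-- The rank of a set `X` in a matroid `M`: the supremum of sizes of independent subsets. -/
noncomputable def mrk {α : Type*} (M : Matroid α) (X : Set α) : ℕ :=
  ⨆ I : {I : Set α // M.Indep I ∧ I ⊆ X}, I.1.ncard

/-- The rank of a matroid. -/
noncomputable def mrank {α : Type*} (M : Matroid α) : ℕ := mrk M M.E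

/-- Deletion of a set from a matroid. -/
def mdelete {α : Type*} (M : Matroid α) (D : Set α) : Matroid α := M ↾ (M.E \ D)

/-- Contraction of a set in a matroid, via duality. -/
def mcontract {α : Type*} (M : Matroid α) (C : Set α) : Matroid α := (M✶ ↾ (M.E \ C))✶

/-- `eps M X` is the number of points (rank-1 flats) of the restriction `M ↾ X`. -/
noncomputable def eps {α : Type*} (M : Matroid α) (X : Set α) : ℕ :=
  {P : Set α | (M ↾ X).IsFlat P ∧ mrk (M ↾ X) P = 1}.ncard

/-- `N` is isomorphic to the uniform matroid `U_{2,n}` (the `n`-point line). -/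
def IsUnif2 {α : Type*} (N : Matroid α) (n : ℕ) : Prop :=
  N.E.Finite ∧ N.E.ncard = n ∧ ∀ I ⊆ N.E, (N.Indep I ↔ I.Finite ∧ I.ncard ≤ 2)

/-- `M` has a minor isomorphic to `U_{2,n}`. -/
def HasLineMinor {α : Type*} (M : Matroid α) (n : ℕ) : Prop :=
  ∃ C D : Set α, IsUnif2 (mdelete (mcontract M C) D) n

/-- `M` is simple: every one- or two-element subset of the ground set is independent. -/
def MSimple {α : Type*} (M : Matroid α) : Prop :=
  ∀ e ∈ M.E, ∀ f ∈ M.E, M.Indep {e, f}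

/-- `M` is round: the ground set admits no partition into two sets of smaller rank. -/
def Round {α : Type*} (M : Matroid α) : Prop :=
  ¬ ∃ A B : Set α, A ∪ B = M.E ∧ Disjoint A B ∧ mrk M A < mrank M ∧ mrk M B < mrank M

/-- `N` is isomorphic to the projective geometry `PG(n-1, F)`: its ground set is in
bijection with the rank-1 subspaces of `F^n` in such a way that independence corresponds to
linear independence. -/
def IsProjGeom {α : Type*} (N : Matroid α) (n : ℕ) (F : Type*) [Field F] : Prop :=
  ∃ f : α → Submodule F (Fin n → F),
    Set.BijOn f N.E {W : Submodule F (Fin n → F) | Module.finrank F W = 1} ∧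
    ∀ I ⊆ N.E, (N.Indep I ↔ I.Finite ∧ Module.finrank F ↥(⨆ x ∈ I, f x) = I.ncard)


/-!
Fix a point `e` on a line `L₀` with at most `q` points. In a simple matroid the points are the
elements, and the lines through `e` cover the ground set, so
`ε(M) - 1 ≤ ∑_{L ∋ e} (|L| - 1) < q · #{lines through e}`, the inequality being strict because
of `L₀`. The lines through `e` are the points of `M ／ e`, so there are at most
`(q^(r-1) - 1)/(q - 1)` of them, whence `ε(M) ≤ q (q^(r-1) - 1)/(q - 1) < (q^r - 1)/(q - 1)`.
-/

section

variable {α : Type*} {M : Matroid α} {I P L X : Set α} {e f : α}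

def IsPoint (M : Matroid α) (P : Set α) : Prop := M.IsFlat P ∧ mrk M P = 1

def IsLine (M : Matroid α) (L : Set α) : Prop := M.IsFlat L ∧ mrk M L = 2

lemma mrk_eq_ncard_of_isBasis [M.RankFinite] (hI : M.IsBasis I X) : mrk M X = I.ncard := by
  have hle : ∀ J : {J : Set α // M.Indep J ∧ J ⊆ X}, J.1.ncard ≤ I.ncard := fun ⟨J, hJ, hJX⟩ => by
    rw [ncard_def, ncard_def]
    refine ENat.toNat_le_toNat ?_ hI.indep.finite.encard_lt_top.ne
    exact hI.eRk_eq_encard ▸ hJ.encard_le_eRk_of_subset hJX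
  have : Nonempty {J : Set α // M.Indep J ∧ J ⊆ X} := ⟨⟨I, hI.indep, hI.subset⟩⟩
  exact le_antisymm (ciSup_le hle)
    (le_ciSup ⟨I.ncard, forall_mem_range.2 hle⟩ ⟨I, hI.indep, hI.subset⟩)

lemma mcontract_eq_contract (M : Matroid α) (C : Set α) : mcontract M C = M ／ C := rfl

lemma MSimple.isNonloop (h : MSimple M) (he : e ∈ M.E) : M.IsNonloop e :=
  indep_singleton.1 (by simpa using h e he e he)

lemma MSimple.restrict (h : MSimple M) (hX : X ⊆ M.E) : MSimple (M ↾ X) :=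
  fun e he f hf => (restrict_indep_iff).2 ⟨h e (hX he) f (hX hf), pair_subset he hf⟩

lemma MSimple.closure_singleton (h : MSimple M) (he : e ∈ M.E) : M.closure {e} = {e} := by
  refine subset_antisymm (fun f hf => ?_) (M.subset_closure {e} (singleton_subset_iff.2 he))
  by_contra hfe
  have hfE : f ∈ M.E := M.closure_subset_ground {e} hf
  rw [(h.isNonloop he).indep.mem_closure_iff] at hf
  exact hf.elim (fun hdep => hdep.not_indep (h f hfE e he)) hfe

lemma MSimple.isPoint_iff [M.RankFinite] (h : MSimple M) : IsPoint M P ↔ ∃ a ∈ M.E, P = {a} := by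
  constructor
  · rintro ⟨hP, hrk⟩
    obtain ⟨I, hI⟩ := M.exists_isBasis P hP.subset_ground
    obtain ⟨a, rfl⟩ := ncard_eq_one.1 (mrk_eq_ncard_of_isBasis hI ▸ hrk)
    have ha : a ∈ M.E := hI.indep.subset_ground rfl
    refine ⟨a, ha, ?_⟩
    rw [← hP.closure, ← hI.closure_eq_closure, h.closure_singleton ha]
  · rintro ⟨a, ha, rfl⟩
    refine ⟨isFlat_iff_closure_eq.2 (h.closure_singleton ha), ?_⟩
    rw [mrk_eq_ncard_of_isBasis (h.isNonloop ha).indep.isBasis_self, ncard_singleton]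

lemma MSimple.eps_eq_ncard [M.Finite] (h : MSimple M) (hX : X ⊆ M.E) : eps M X = X.ncard := by
  have hpts : {P | IsPoint (M ↾ X) P} = (fun a => {a}) '' X := by
    ext P
    simp [(h.restrict hX).isPoint_iff, eq_comm]
  rw [eps, ← ncard_image_of_injective X singleton_injective, ← hpts]
  rfl

lemma MSimple.exists_isLine_mem [M.RankFinite] (h : MSimple M) (he : e ∈ M.E) (hf : f ∈ M.E)
    (hef : e ≠ f) : ∃ L, IsLine M L ∧ e ∈ L ∧ f ∈ L := by
  have hI : M.Indep {e, f} := h e he f hf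
  refine ⟨M.closure {e, f}, ⟨isFlat_closure _, ?_⟩, ?_, ?_⟩
  · rw [mrk_eq_ncard_of_isBasis hI.isBasis_closure, ncard_pair hef]
  · exact M.mem_closure_of_mem' (mem_insert e {f}) he
  · exact M.mem_closure_of_mem' (mem_insert_of_mem e rfl) hf

lemma MSimple.diff_singleton_subset_biUnion_isLine [M.RankFinite] (h : MSimple M) (he : e ∈ M.E) :
    M.E \ {e} ⊆ ⋃ L ∈ {L | IsLine M L ∧ e ∈ L}, L \ {e} := by
  rintro f ⟨hf, hfe⟩
  obtain ⟨L, hL, heL, hfL⟩ := h.exists_isLine_mem he hf (Ne.symm hfe)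
  exact mem_biUnion ⟨hL, heL⟩ ⟨hfL, hfe⟩

lemma isFlat_contract_singleton_iff (he : e ∈ M.E) (heP : e ∉ P) :
    (M ／ {e}).IsFlat P ↔ M.IsFlat (insert e P) := by
  rw [isFlat_iff_closure_eq, isFlat_iff_closure_eq, contract_closure_eq, union_singleton]
  constructor
  · intro hP
    have he_cl : e ∈ M.closure (insert e P) := M.mem_closure_of_mem' (mem_insert e P) he
    calc M.closure (insert e P) = insert e (M.closure (insert e P) \ {e}) := by
          rw [insert_sdiff_singleton, insert_eq_of_mem he_cl]
      _ = insert e P := by rw [hP]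
  · intro hP
    rw [hP, insert_sdiff_self_of_notMem heP]

lemma mrk_contract_singleton_add_one [M.RankFinite] (he : M.IsNonloop e) (hX : X ⊆ M.E)
    (heX : e ∉ X) : mrk (M ／ {e}) X + 1 = mrk M (insert e X) := by
  obtain ⟨J, hJ⟩ := (M ／ {e}).exists_isBasis X (subset_sdiff_singleton hX heX)
  have hJe : M.IsBasis (insert e J) (insert e X) := by
    simpa only [union_singleton] using he.indep.union_isBasis_union_of_contract_isBasis hJ
  rw [mrk_eq_ncard_of_isBasis hJ, mrk_eq_ncard_of_isBasis hJe,
    ncard_insert_of_notMem (fun heJ => heX (hJ.subset heJ)) hJ.indep.finite]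

lemma isPoint_contract_singleton_iff [M.RankFinite] (he : M.IsNonloop e) (heP : e ∉ P) :
    IsPoint (M ／ {e}) P ↔ IsLine M (insert e P) := by
  constructor
  · rintro ⟨hP, hrk⟩
    have hPE : P ⊆ M.E := hP.subset_ground.trans sdiff_subset
    rw [isFlat_contract_singleton_iff he.mem_ground heP] at hP
    exact ⟨hP, by rw [← mrk_contract_singleton_add_one he hPE heP, hrk]⟩
  · rintro ⟨hL, hrk⟩
    have hPE : P ⊆ M.E := (subset_insert e P).trans hL.subset_ground
    rw [← isFlat_contract_singleton_iff he.mem_ground heP] at hL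
    exact ⟨hL, by have := mrk_contract_singleton_add_one he hPE heP; omega⟩

lemma eps_contract_singleton [M.RankFinite] (he : M.IsNonloop e) :
    eps (M ／ {e}) (M ／ {e}).E = {L | IsLine M L ∧ e ∈ L}.ncard := by
  have hpts : ∀ P ∈ {P | IsPoint (M ／ {e}) P}, e ∉ P := fun P hP heP =>
    (hP.1.subset_ground heP).2 rfl
  have hlines : {L | IsLine M L ∧ e ∈ L} = insert e '' {P | IsPoint (M ／ {e}) P} := by
    ext L
    refine ⟨fun ⟨hL, heL⟩ => ⟨L \ {e}, ?_, insert_sdiff_self_of_mem heL⟩, ?_⟩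
    · show IsPoint _ _
      rwa [isPoint_contract_singleton_iff he (fun h => h.2 rfl), insert_sdiff_self_of_mem heL]
    · rintro ⟨P, hP, rfl⟩
      exact ⟨(isPoint_contract_singleton_iff he (hpts P hP)).1 hP, mem_insert e P⟩
  rw [eps, restrict_ground_eq_self, hlines, InjOn.ncard_image]
  · rfl
  · intro P hP Q hQ hPQ
    rw [← insert_sdiff_self_of_notMem (hpts P hP), hPQ, insert_sdiff_self_of_notMem (hpts Q hQ)]

lemma Set.Finite.ncard_biUnion_lt_mul {ι : Type*} {t : Set ι} (ht : t.Finite) {s : ι → Set α}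
    {k : ℕ} (hle : ∀ i ∈ t, (s i).ncard ≤ k) (hlt : ∃ i ∈ t, (s i).ncard < k) :
    (⋃ i ∈ t, s i).ncard < k * t.ncard := by
  calc (⋃ i ∈ t, s i).ncard = (⋃ i ∈ ht.toFinset, s i).ncard := by simp
    _ ≤ ∑ i ∈ ht.toFinset, (s i).ncard := ht.toFinset.set_ncard_biUnion_le s
    _ < ∑ _i ∈ ht.toFinset, k := Finset.sum_lt_sum (by simpa) (by simpa)
    _ = k * t.ncard := by rw [Finset.sum_const, ncard_eq_toFinset_card t ht, smul_eq_mul, mul_comm]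

lemma MSimple.ncard_ground_le_mul [M.Finite] (h : MSimple M) {k : ℕ}
    (hlines : ∀ L, IsLine M L → L.ncard ≤ k + 1) (hL : IsLine M L) (heL : e ∈ L)
    (hLk : L.ncard ≤ k) : M.E.ncard ≤ k * {L | IsLine M L ∧ e ∈ L}.ncard := by
  have heE : e ∈ M.E := hL.1.subset_ground heL
  have hfin : {L | IsLine M L ∧ e ∈ L}.Finite :=
    M.ground_finite.finite_subsets.subset fun L' hL' => hL'.1.1.subset_ground
  have hncard : ∀ L', IsLine M L' → e ∈ L' → (L' \ {e}).ncard + 1 = L'.ncard := fun L' hL' heL' =>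
    ncard_sdiff_singleton_add_one heL' (M.set_finite L' hL'.1.subset_ground)
  have hlt : (⋃ L' ∈ {L | IsLine M L ∧ e ∈ L}, L' \ {e}).ncard < k * _ :=
    hfin.ncard_biUnion_lt_mul
      (fun L' ⟨hL', heL'⟩ => by have := hlines L' hL'; have := hncard L' hL' heL'; omega)
      ⟨L, ⟨hL, heL⟩, by have := hncard L hL heL; omega⟩
  have hcover := ncard_le_ncard (h.diff_singleton_subset_biUnion_isLine heE)
    (hfin.biUnion fun L' hL' => (M.set_finite L' hL'.1.1.subset_ground).sdiff)
  have := ncard_sdiff_singleton_add_one heE M.ground_finite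
  omega

lemma Nat.cast_geom_sum_eq {K : Type*} [DivisionRing K] [CharZero K] {q : ℕ} (hq : q ≠ 1)
    (n : ℕ) : ((∑ i ∈ Finset.range n, q ^ i : ℕ) : K) = ((q : K) ^ n - 1) / ((q : K) - 1) := by
  push_cast
  exact geom_sum_eq (by exact_mod_cast hq) n

end

theorem stmt12_general {α : Type*} (M : Matroid α) [M.Finite] (q r : ℕ) (hq : 2 ≤ q)
    (hsimple : MSimple M)
    (heps : (eps M M.E : ℝ) = ((q : ℝ) ^ r - 1) / ((q : ℝ) - 1))
    (hlines : ∀ L, M.IsFlat L → mrk M L = 2 → eps M L ≤ q + 1)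
    (hcon : ∀ e ∈ M.E, (eps (mcontract M {e}) (mcontract M {e}).E : ℝ) ≤
      ((q : ℝ) ^ (r - 1) - 1) / ((q : ℝ) - 1)) :
    ∀ L, M.IsFlat L → mrk M L = 2 → eps M L = q + 1 := by
  intro L hL hrk
  have hlines' : ∀ L, IsLine M L → L.ncard ≤ q + 1 := fun L' hL' =>
    hsimple.eps_eq_ncard hL'.1.subset_ground ▸ hlines L' hL'.1 hL'.2
  rw [hsimple.eps_eq_ncard hL.subset_ground]
  refine le_antisymm (hlines' L ⟨hL, hrk⟩) (not_lt.1 fun hLq => ?_)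
  obtain ⟨I, hI⟩ := M.exists_isBasis L hL.subset_ground
  obtain ⟨e, heI⟩ := nonempty_of_ncard_ne_zero (by rw [← mrk_eq_ncard_of_isBasis hI, hrk]; norm_num)
  have heE : e ∈ M.E := hI.indep.subset_ground heI
  have hq1 : q ≠ 1 := by omega
  have hE : M.E.ncard = ∑ i ∈ Finset.range r, q ^ i := by
    rw [← hsimple.eps_eq_ncard subset_rfl]
    exact_mod_cast heps.trans (Nat.cast_geom_sum_eq hq1 r).symm
  have hm : {L | IsLine M L ∧ e ∈ L}.ncard ≤ ∑ i ∈ Finset.range (r - 1), q ^ i := by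
    have := hcon e heE
    rw [mcontract_eq_contract, eps_contract_singleton (hsimple.isNonloop heE),
      ← Nat.cast_geom_sum_eq hq1] at this
    exact_mod_cast this
  have hcount := hsimple.ncard_ground_le_mul hlines' ⟨hL, hrk⟩ (hI.subset heI) (by omega)
  obtain _ | r := r
  · exact (ncard_pos M.ground_finite).2 ⟨e, heE⟩ |>.ne' (by simpa using hE)
  · rw [hE, geom_sum_succ] at hcount
    rw [Nat.add_sub_cancel] at hm
    have := Nat.mul_le_mul_left q hm
    omega

/-- In an extremal matroid, every line has exactly `q + 1` points. -/
theorem stmt12 {α : Type*} (M : Matroid α) [M.Finite] (q r : ℕ) (hq : 2 ≤ q)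
    (hsimple : MSimple M) (hrank : mrank M = r)
    (heps : (eps M M.E : ℝ) = ((q : ℝ) ^ r - 1) / ((q : ℝ) - 1))
    (hlines : ∀ L, M.IsFlat L → mrk M L = 2 → eps M L ≤ q + 1)
    (hcon : ∀ e ∈ M.E, (eps (mcontract M {e}) (mcontract M {e}).E : ℝ) ≤
      ((q : ℝ) ^ (r - 1) - 1) / ((q : ℝ) - 1)) :
    ∀ L, M.IsFlat L → mrk M L = 2 → eps M L = q + 1 :=
  stmt12_general M q r hq hsimple heps hlines hcon
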